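/- With notation as in the reduction setting: let f̄ ∈ (O_K/𝔭O_K)[t;σ̄,δ̄] be monic of degree m and let S_{f̄} be the associated Petit algebra. If O_K/𝔭O_K is a field and f̄ is irreducible in (O_K/𝔭O_K)[t;σ̄,δ̄], then S_{f̄} is a division algebra. Conversely, if S_{f̄} is a division algebra, then O_K/𝔭O_K is a field and f̄ is irreducible in (O_K/𝔭O_K)[t;σ̄,δ̄]. -/

import Mathlib

/-!
Over a division ring `S`, right division with remainder works in `R = S[t;σ,δ]`, so degrees add,
left ideals are principal, and for `f` irreducible and `0 ≠ b` of degree `< m` the left ideal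
`R b + R f` is all of `R`: `p b + q f = 1`. If `a ∘ b = 0` with `a ≠ 0` of degree `n < m`, i.e.
`a b ∈ R f`, then every `s ∈ S_f` equals `r ∘ b` for the remainder `r` of `s p` modulo `a`. Thus
`r ↦ r ∘ b` maps the `|S| ^ n` polynomials of degree `< n` onto the `|S| ^ m` elements of `S_f`,
which is absurd for finite `S`; so the finite algebra `S_f` has no zero divisors.
Conversely `C a ∘ C b = C (a b)`, and `g ∘ h = 0` when `f = g h`, so in a division algebra `S_f`
the finite ring `O_K/𝔭O_K` has no zero divisors, hence is a field, and `f` has no proper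
factorization; over a field degrees add, so `f` of degree `m ≥ 1` is not a unit.
-/

/-- A presentation of the skew polynomial ring `S[t;σ,δ]`: a ring `R` together with a
ring homomorphism `C : S →+* R`, a distinguished element `X` (playing the role of `t`)
satisfying the twisted commutation rule `X * C a = C (σ a) * X + C (δ a)`, and such that
every element of `R` is in a unique way a finite sum `∑ C aᵢ * X ^ i`. -/
structure SkewPolyRing (S : Type*) [Ring S] (σ : S →+* S) (δ : S → S)
    (R : Type*) [Ring R] where
  C : S →+* R
  X : R
  X_mul : ∀ a : S, X * C a = C (σ a) * X + C (δ a)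
  coeff : R ≃+ (ℕ →₀ S)
  coeff_symm_apply : ∀ p : ℕ →₀ S, coeff.symm p = p.sum fun i a => C a * X ^ i

namespace SkewPolyRing

variable {S : Type*} [Ring S] {σ : S →+* S} {δ : S → S} {R : Type*} [Ring R]

/-- The degree of a skew polynomial, with `deg 0 = ⊥`. -/
noncomputable def deg (P : SkewPolyRing S σ δ R) (x : R) : WithBot ℕ :=
  (P.coeff x).support.max

/-- The leading coefficient of a skew polynomial. -/
noncomputable def lcoeff (P : SkewPolyRing S σ δ R) (x : R) : S :=
  P.coeff x ((P.deg x).unbotD 0)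

/-- `f` is monic of degree `m`. -/
def Monic (P : SkewPolyRing S σ δ R) (f : R) (m : ℕ) : Prop :=
  P.deg f = (m : WithBot ℕ) ∧ P.coeff f m = 1

open Classical in
/-- The remainder of right division by `f`. -/
noncomputable def modr (P : SkewPolyRing S σ δ R) (f g : R) : R :=
  if h : ∃ qr : R × R, g = qr.1 * f + qr.2 ∧ P.deg qr.2 < P.deg f then
    (Classical.choose h).2
  else g

/-- The multiplication `x ∘ y = (x * y) mod_r f` of the Petit algebra `S_f`. -/
noncomputable def pmul (P : SkewPolyRing S σ δ R) (f x y : R) : R :=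
  P.modr f (x * y)

/-- The element of `S_f` with coefficient vector `c ∈ S^m`. -/
def ofVec (P : SkewPolyRing S σ δ R) {m : ℕ} (c : Fin m → S) : R :=
  ∑ i : Fin m, P.C (c i) * P.X ^ (i : ℕ)

end SkewPolyRing

/-- `δ` is a left `σ`-derivation of `S`. -/
def IsLeftSigmaDerivation {S : Type*} [Ring S] (σ : S →+* S) (δ : S → S) : Prop :=
  (∀ a b : S, δ (a + b) = δ a + δ b) ∧ ∀ a b : S, δ (a * b) = σ a * δ b + δ a * b

theorem IsUnit.iterate_map {S : Type*} [Semiring S] {σ : S →+* S} {c : S} (hc : IsUnit c)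
    (j : ℕ) : IsUnit (σ^[j] c) := by
  rw [← RingHom.coe_pow]
  exact hc.map _

namespace SkewPolyRing

section Ring

variable {S : Type*} [Ring S] {σ : S →+* S} {δ : S → S} {R : Type*} [Ring R]
  (P : SkewPolyRing S σ δ R) {f : R} {m : ℕ}

theorem coeff_C_mul_X_pow (i : ℕ) (a : S) : P.coeff (P.C a * P.X ^ i) = Finsupp.single i a := by
  rw [← P.coeff.apply_symm_apply (Finsupp.single i a), P.coeff_symm_apply,
    Finsupp.sum_single_index (by simp)]

theorem coeff_C (a : S) : P.coeff (P.C a) = Finsupp.single 0 a := by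
  simpa using P.coeff_C_mul_X_pow 0 a

theorem coeff_one : P.coeff 1 = Finsupp.single 0 1 := by
  simpa using P.coeff_C 1

theorem C_injective : Function.Injective P.C := fun a b hab => by
  simpa [coeff_C] using congrArg (P.coeff · 0) hab

include P in
theorem delta_zero : δ 0 = 0 :=
  P.C_injective (by simpa using (P.X_mul 0).symm)

theorem as_sum_support_C_mul_X_pow (x : R) :
    x = ∑ i ∈ (P.coeff x).support, P.C (P.coeff x i) * P.X ^ i := by
  conv_lhs => rw [← P.coeff.symm_apply_apply x, P.coeff_symm_apply]
  rfl

theorem coeff_C_mul (a : S) (x : R) (n : ℕ) : P.coeff (P.C a * x) n = a * P.coeff x n := by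
  classical
  conv_lhs => rw [P.as_sum_support_C_mul_X_pow x]
  simp only [Finset.mul_sum, ← mul_assoc, ← map_mul, map_sum, coeff_C_mul_X_pow,
    Finsupp.finsetSum_apply, Finsupp.single_apply, Finset.sum_ite_eq', Finsupp.mem_support_iff]
  split_ifs with h
  · rfl
  · rw [not_not.mp h, mul_zero]

theorem deg_le_coe_iff {x : R} {n : ℕ} : P.deg x ≤ n ↔ ∀ k, n < k → P.coeff x k = 0 := by
  rw [deg, Finset.max_eq_sup_withBot, Finset.sup_le_iff]
  refine forall_congr' fun k => ?_
  rw [Finsupp.mem_support_iff, ← not_imp_not, not_not, ← Nat.cast_withBot, Nat.cast_le, not_le]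

theorem deg_lt_coe_iff {x : R} {n : ℕ} : P.deg x < n ↔ ∀ k, n ≤ k → P.coeff x k = 0 := by
  rw [deg, Finset.max_eq_sup_withBot, Finset.sup_lt_iff (by simp)]
  refine forall_congr' fun k => ?_
  rw [Finsupp.mem_support_iff, ← not_imp_not, not_not, ← Nat.cast_withBot, Nat.cast_lt, not_lt]

theorem deg_eq_coe_iff {x : R} {n : ℕ} : P.deg x = n ↔ P.coeff x n ≠ 0 ∧ P.deg x ≤ n :=
  ⟨fun h => ⟨Finsupp.mem_support_iff.mp (Finset.mem_of_max h), h.le⟩,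
    fun ⟨hn, hle⟩ => le_antisymm hle (Finset.le_max (Finsupp.mem_support_iff.mpr hn))⟩

theorem deg_zero : P.deg 0 = ⊥ := by
  simp [deg]

theorem deg_eq_bot_iff {x : R} : P.deg x = ⊥ ↔ x = 0 := by
  rw [deg, Finset.max_eq_bot, Finsupp.support_eq_empty, AddEquivClass.map_eq_zero_iff]

theorem exists_deg_eq_coe {x : R} (hx : x ≠ 0) : ∃ n : ℕ, P.deg x = n := by
  obtain ⟨n, hn⟩ := WithBot.ne_bot_iff_exists.mp (P.deg_eq_bot_iff.not.mpr hx)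
  exact ⟨n, hn.symm⟩

theorem exists_deg_lt_coe (x : R) : ∃ N : ℕ, P.deg x < N := by
  rcases eq_or_ne x 0 with rfl | hx
  · exact ⟨0, P.deg_zero ▸ WithBot.bot_lt_coe 0⟩
  · obtain ⟨n, hn⟩ := P.exists_deg_eq_coe hx
    exact ⟨n + 1, by rw [hn]; exact_mod_cast n.lt_succ_self⟩

theorem deg_sub_lt {x y : R} {n : ℕ} (hx : P.deg x < n) (hy : P.deg y < n) :
    P.deg (x - y) < n := by
  rw [deg_lt_coe_iff] at hx hy ⊢
  intro k hk
  rw [map_sub, Finsupp.sub_apply, hx k hk, hy k hk, sub_zero]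

theorem deg_C_mul_X_pow_le (a : S) (i : ℕ) : P.deg (P.C a * P.X ^ i) ≤ i := by
  rw [deg_le_coe_iff]
  intro k hk
  rw [coeff_C_mul_X_pow, Finsupp.single_eq_of_ne (by omega)]

theorem deg_C_le (a : S) : P.deg (P.C a) ≤ (0 : ℕ) := by
  simpa using P.deg_C_mul_X_pow_le a 0

theorem eq_C_of_deg_le_zero {x : R} (hx : P.deg x ≤ (0 : ℕ)) : x = P.C (P.coeff x 0) := by
  apply P.coeff.injective
  ext k
  rw [coeff_C, Finsupp.single_apply]
  split_ifs with hk
  · rw [hk]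
  · exact P.deg_le_coe_iff.mp hx k (by omega)

theorem coeff_mul_eq_sum (x y : R) (k : ℕ) :
    P.coeff (x * y) k = ∑ i ∈ (P.coeff x).support, P.coeff x i * P.coeff (P.X ^ i * y) k := by
  conv_lhs => rw [P.as_sum_support_C_mul_X_pow x]
  simp only [Finset.sum_mul, mul_assoc, map_sum, Finsupp.finsetSum_apply, coeff_C_mul]

variable {P} in
theorem Monic.ne_zero (hf : P.Monic f m) : f ≠ 0 := fun h => by
  have hdeg := hf.1
  rw [h, P.deg_zero] at hdeg
  exact WithBot.bot_ne_coe hdeg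

variable {P} in
theorem Monic.isUnit_coeff (hf : P.Monic f m) : IsUnit (P.coeff f m) :=
  hf.2 ▸ isUnit_one

theorem coeff_ofVec {n : ℕ} (c : Fin n → S) (j : ℕ) :
    P.coeff (P.ofVec c) j = if h : j < n then c ⟨j, h⟩ else 0 := by
  simp only [ofVec, map_sum, coeff_C_mul_X_pow, Finsupp.finsetSum_apply, Finsupp.single_apply]
  split_ifs with h
  · rw [Finset.sum_eq_single ⟨j, h⟩ (fun i _ hi => if_neg fun he => hi (Fin.ext he)) (by simp),
      if_pos rfl]
  · exact Finset.sum_eq_zero fun i _ => if_neg fun (he : (i : ℕ) = j) => h (he ▸ i.isLt)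

def degLT (n : ℕ) : Set R := {x | P.deg x < n}

noncomputable def degLTEquiv (n : ℕ) : P.degLT n ≃ (Fin n → S) where
  toFun x i := P.coeff x i
  invFun c := ⟨P.ofVec c, P.deg_lt_coe_iff.mpr fun k hk => by rw [coeff_ofVec, dif_neg (by omega)]⟩
  left_inv x := Subtype.ext <| P.coeff.injective <| Finsupp.ext fun j => by
    rw [coeff_ofVec]
    split_ifs with h
    · rfl
    · exact (P.deg_lt_coe_iff.mp x.2 j (by omega)).symm
  right_inv c := funext fun i => by simp [coeff_ofVec]

theorem finite_degLT [Finite S] (n : ℕ) : (P.degLT n).Finite :=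
  Set.finite_coe_iff.mp (Finite.of_equiv _ (P.degLTEquiv n).symm)

theorem ncard_degLT [Finite S] (n : ℕ) : (P.degLT n).ncard = Nat.card S ^ n := by
  rw [← Nat.card_coe_set_eq, Nat.card_congr (P.degLTEquiv n), Nat.card_fun, Nat.card_fin]

theorem zero_mem_degLT (n : ℕ) : (0 : R) ∈ P.degLT n := by
  show P.deg 0 < n
  rw [P.deg_zero]
  exact WithBot.bot_lt_coe n

theorem C_mem_degLT {n : ℕ} (hn : 1 ≤ n) (a : S) : P.C a ∈ P.degLT n :=
  (P.deg_C_le a).trans_lt (by exact_mod_cast hn)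

def IsDivisionPetitAlgebra (f : R) (m : ℕ) : Prop :=
  ∀ x ∈ P.degLT m, x ≠ 0 →
    Set.BijOn (P.pmul f x) (P.degLT m) (P.degLT m) ∧
      Set.BijOn (fun y => P.pmul f y x) (P.degLT m) (P.degLT m)

theorem coeff_X_mul_succ (x : R) (k : ℕ) :
    P.coeff (P.X * x) (k + 1) = σ (P.coeff x k) + δ (P.coeff x (k + 1)) := by
  classical
  have hX : ∀ (c : S) (i : ℕ),
      P.X * (P.C c * P.X ^ i) = P.C (σ c) * P.X ^ (i + 1) + P.C (δ c) * P.X ^ i := by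
    intro c i
    rw [← mul_assoc, P.X_mul, add_mul, mul_assoc, ← pow_succ']
  conv_lhs => rw [P.as_sum_support_C_mul_X_pow x]
  simp only [Finset.mul_sum, hX, map_sum, map_add, coeff_C_mul_X_pow, Finsupp.finsetSum_apply,
    Finsupp.add_apply, Finset.sum_add_distrib, Finsupp.single_apply, Nat.add_right_cancel_iff,
    Finset.sum_ite_eq', Finsupp.mem_support_iff]
  congr 1 <;> split_ifs with h
  · rfl
  · rw [not_not.mp h, map_zero]
  · rfl
  · rw [not_not.mp h, P.delta_zero]

theorem deg_X_pow_mul_le {x : R} {n : ℕ} (hx : P.deg x ≤ n) (i : ℕ) :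
    P.deg (P.X ^ i * x) ≤ ↑(n + i) := by
  induction i with
  | zero => simpa using hx
  | succ i ih =>
    rw [deg_le_coe_iff] at ih ⊢
    intro k hk
    obtain ⟨k, rfl⟩ : ∃ j, k = j + 1 := ⟨k - 1, by omega⟩
    rw [pow_succ', mul_assoc, P.coeff_X_mul_succ, ih k (by omega), ih (k + 1) (by omega),
      _root_.map_zero, P.delta_zero, add_zero]

theorem coeff_X_pow_mul {x : R} {n : ℕ} (hx : P.deg x ≤ n) (i : ℕ) :
    P.coeff (P.X ^ i * x) (n + i) = σ^[i] (P.coeff x n) := by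
  induction i with
  | zero => simp
  | succ i ih =>
    rw [pow_succ', mul_assoc, ← add_assoc, P.coeff_X_mul_succ, ih,
      P.deg_le_coe_iff.mp (P.deg_X_pow_mul_le hx i) _ (by omega), P.delta_zero, add_zero,
      Function.iterate_succ_apply']

theorem deg_mul_le {x y : R} {d n : ℕ} (hx : P.deg x ≤ d) (hy : P.deg y ≤ n) :
    P.deg (x * y) ≤ ↑(d + n) := by
  rw [deg_le_coe_iff] at hx ⊢
  intro k hk
  rw [coeff_mul_eq_sum]
  refine Finset.sum_eq_zero fun i hi => ?_
  have hid : i ≤ d := not_lt.mp fun h => Finsupp.mem_support_iff.mp hi (hx i h)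
  rw [P.deg_le_coe_iff.mp (P.deg_X_pow_mul_le hy i) k (by omega), mul_zero]

theorem coeff_mul_of_deg_le {x y : R} {d n : ℕ} (hx : P.deg x ≤ d) (hy : P.deg y ≤ n) :
    P.coeff (x * y) (d + n) = P.coeff x d * σ^[d] (P.coeff y n) := by
  rw [coeff_mul_eq_sum, Finset.sum_eq_single d]
  · rw [add_comm, P.coeff_X_pow_mul hy]
  · intro i hi hid
    have hid : i < d :=
      lt_of_le_of_ne (not_lt.mp fun h => Finsupp.mem_support_iff.mp hi
        (P.deg_le_coe_iff.mp hx i h)) hid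
    rw [P.deg_le_coe_iff.mp (P.deg_X_pow_mul_le hy i) (d + n) (by omega), mul_zero]
  · intro hd
    rw [Finsupp.notMem_support_iff.mp hd, zero_mul]

theorem deg_mul_of_isUnit {x y : R} {a b : ℕ} (hx : P.deg x = a) (hy : P.deg y = b)
    (hu : IsUnit (P.coeff y b)) : P.deg (x * y) = ↑(a + b) := by
  obtain ⟨hxa, hxle⟩ := P.deg_eq_coe_iff.mp hx
  refine P.deg_eq_coe_iff.mpr ⟨?_, P.deg_mul_le hxle hy.le⟩
  rw [P.coeff_mul_of_deg_le hxle hy.le]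
  exact ((hu.iterate_map a).mul_left_eq_zero).not.mpr hxa

theorem exists_deg_sub_mul_lt {d g : R} {k n : ℕ} (hd : P.deg d = k)
    (hu : IsUnit (P.coeff d k)) (hg : P.deg g = n) (hkn : k ≤ n) :
    ∃ t : R, P.deg (g - t * d) < n := by
  obtain ⟨v, hv⟩ := hu.iterate_map (σ := σ) (n - k)
  have ht := P.deg_C_mul_X_pow_le (P.coeff g n * ↑v⁻¹) (n - k)
  have hle := P.deg_mul_le ht hd.le
  have htop := P.coeff_mul_of_deg_le ht hd.le
  rw [Nat.sub_add_cancel hkn] at hle htop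
  refine ⟨P.C (P.coeff g n * ↑v⁻¹) * P.X ^ (n - k), P.deg_lt_coe_iff.mpr fun j hj => ?_⟩
  rw [map_sub, Finsupp.sub_apply]
  rcases hj.eq_or_lt with rfl | hlt
  · rw [htop, coeff_C_mul_X_pow, Finsupp.single_eq_same, ← hv, Units.inv_mul_cancel_right,
      sub_self]
  · rw [P.deg_le_coe_iff.mp (P.deg_eq_coe_iff.mp hg).2 j hlt, P.deg_le_coe_iff.mp hle j hlt,
      sub_zero]

theorem exists_eq_mul_add {d : R} {k : ℕ} (hd : P.deg d = k) (hu : IsUnit (P.coeff d k))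
    (g : R) : ∃ q r : R, g = q * d + r ∧ P.deg r < k := by
  suffices ∀ N : ℕ, ∀ g : R, P.deg g < N → ∃ q r : R, g = q * d + r ∧ P.deg r < k by
    obtain ⟨N, hN⟩ := P.exists_deg_lt_coe g
    exact this N g hN
  intro N
  induction N with
  | zero => exact fun g hg => ⟨0, g, by simp, hg.trans_le (by simp)⟩
  | succ N ih =>
    intro g hg
    by_cases hgk : P.deg g < k
    · exact ⟨0, g, by simp, hgk⟩
    have hg0 : g ≠ 0 := fun h => hgk (h ▸ P.deg_zero ▸ WithBot.bot_lt_coe k)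
    obtain ⟨n, hn⟩ := P.exists_deg_eq_coe hg0
    have hkn : k ≤ n := by
      rw [hn] at hgk
      exact_mod_cast not_lt.mp hgk
    have hnN : n < N + 1 := by
      rw [hn] at hg
      exact_mod_cast hg
    obtain ⟨t, ht⟩ := P.exists_deg_sub_mul_lt hd hu hn hkn
    obtain ⟨q, r, hqr, hr⟩ := ih (g - t * d) (ht.trans_le (by exact_mod_cast Nat.le_of_lt_succ hnN))
    exact ⟨q + t, r, by rw [add_mul, add_right_comm, ← hqr, sub_add_cancel], hr⟩

theorem eq_of_mul_add_eq_mul_add {d q₁ q₂ r₁ r₂ : R} {k : ℕ} (hd : P.deg d = k)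
    (hu : IsUnit (P.coeff d k)) (h : q₁ * d + r₁ = q₂ * d + r₂) (h₁ : P.deg r₁ < k)
    (h₂ : P.deg r₂ < k) : r₁ = r₂ := by
  have hq : (q₁ - q₂) * d = r₂ - r₁ := by
    rw [sub_mul, sub_eq_sub_iff_add_eq_add, h, add_comm]
  by_contra hne
  have hq0 : q₁ - q₂ ≠ 0 := by
    intro h0
    rw [h0, zero_mul, eq_comm, sub_eq_zero] at hq
    exact hne hq.symm
  obtain ⟨n, hn⟩ := P.exists_deg_eq_coe hq0
  have hlt := P.deg_sub_lt h₂ h₁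
  rw [← hq, P.deg_mul_of_isUnit hn hd hu] at hlt
  exact absurd (Nat.cast_lt.mp hlt) (by omega)

theorem modr_eq {g q r : R} (hf : P.Monic f m) (h : g = q * f + r) (hr : P.deg r < m) :
    P.modr f g = r := by
  have hex : ∃ qr : R × R, g = qr.1 * f + qr.2 ∧ P.deg qr.2 < P.deg f := ⟨(q, r), h, hf.1 ▸ hr⟩
  obtain ⟨h₁, h₂⟩ := Classical.choose_spec hex
  rw [modr, dif_pos hex]
  exact P.eq_of_mul_add_eq_mul_add hf.1 hf.isUnit_coeff (h₁.symm.trans h)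
    (h₂.trans_eq hf.1) hr

theorem exists_eq_mul_add_modr (hf : P.Monic f m) (g : R) :
    ∃ q : R, g = q * f + P.modr f g ∧ P.deg (P.modr f g) < m := by
  obtain ⟨q, r, h, hr⟩ := P.exists_eq_mul_add hf.1 hf.isUnit_coeff g
  rw [P.modr_eq hf h hr]
  exact ⟨q, h, hr⟩

theorem modr_sub (hf : P.Monic f m) (g g' : R) :
    P.modr f (g - g') = P.modr f g - P.modr f g' := by
  obtain ⟨q, hq, hr⟩ := P.exists_eq_mul_add_modr hf g
  obtain ⟨q', hq', hr'⟩ := P.exists_eq_mul_add_modr hf g'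
  refine P.modr_eq hf (q := q - q') ?_ (P.deg_sub_lt hr hr')
  conv_lhs => rw [hq, hq']
  noncomm_ring

theorem modr_zero (hf : P.Monic f m) : P.modr f 0 = 0 :=
  P.modr_eq hf (q := 0) (by simp) (P.deg_zero ▸ WithBot.bot_lt_coe m)

theorem modr_self (hf : P.Monic f m) : P.modr f f = 0 :=
  P.modr_eq hf (q := 1) (by simp) (P.deg_zero ▸ WithBot.bot_lt_coe m)

theorem pmul_mem_degLT (hf : P.Monic f m) (x y : R) : P.pmul f x y ∈ P.degLT m :=
  (P.exists_eq_mul_add_modr hf (x * y)).choose_spec.2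

theorem pmul_sub (hf : P.Monic f m) (x y y' : R) :
    P.pmul f x (y - y') = P.pmul f x y - P.pmul f x y' := by
  rw [pmul, pmul, pmul, mul_sub, P.modr_sub hf]

theorem sub_pmul (hf : P.Monic f m) (x x' y : R) :
    P.pmul f (x - x') y = P.pmul f x y - P.pmul f x' y := by
  rw [pmul, pmul, pmul, sub_mul, P.modr_sub hf]

theorem pmul_zero (hf : P.Monic f m) (x : R) : P.pmul f x 0 = 0 := by
  rw [pmul, mul_zero, P.modr_zero hf]

theorem eq_zero_or_eq_zero_of_pmul_eq_zero (hf : P.Monic f m)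
    (hdiv : P.IsDivisionPetitAlgebra f m) {x y : R} (hx : x ∈ P.degLT m) (hy : y ∈ P.degLT m)
    (h : P.pmul f x y = 0) : x = 0 ∨ y = 0 := by
  by_contra! hxy
  exact hxy.2 ((hdiv x hx hxy.1).1.injOn hy (P.zero_mem_degLT m)
    (h.trans (P.pmul_zero hf x).symm))

theorem noZeroDivisors_of_isDivisionPetitAlgebra (hf : P.Monic f m) (hm : 1 ≤ m)
    (hdiv : P.IsDivisionPetitAlgebra f m) : NoZeroDivisors S := by
  refine ⟨fun {a b} hab => ?_⟩
  have h : P.pmul f (P.C a) (P.C b) = 0 := by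
    rw [pmul, ← map_mul, hab, _root_.map_zero, P.modr_zero hf]
  simpa only [map_eq_zero_iff P.C P.C_injective] using
    P.eq_zero_or_eq_zero_of_pmul_eq_zero hf hdiv (P.C_mem_degLT hm a) (P.C_mem_degLT hm b) h

theorem not_exists_factor_of_isDivisionPetitAlgebra (hf : P.Monic f m)
    (hdiv : P.IsDivisionPetitAlgebra f m) :
    ¬∃ g h : R, P.deg g < m ∧ P.deg h < m ∧ f = g * h := by
  rintro ⟨g, h, hg, hh, rfl⟩
  rcases P.eq_zero_or_eq_zero_of_pmul_eq_zero hf hdiv hg hh (P.modr_self hf) with rfl | rfl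
  · exact hf.ne_zero (zero_mul h)
  · exact hf.ne_zero (mul_zero g)

end Ring

section DivisionRing

variable {S : Type*} [DivisionRing S] {σ : S →+* S} {δ : S → S} {R : Type*} [Ring R]
  (P : SkewPolyRing S σ δ R) {f : R} {m : ℕ}

theorem deg_one : P.deg 1 = (0 : ℕ) :=
  P.deg_eq_coe_iff.mpr ⟨by simp [coeff_one], by simpa using P.deg_C_le 1⟩

theorem deg_mul (x y : R) : P.deg (x * y) = P.deg x + P.deg y := by
  rcases eq_or_ne y 0 with rfl | hy
  · simp [P.deg_zero]
  rcases eq_or_ne x 0 with rfl | hx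
  · simp [P.deg_zero]
  obtain ⟨a, ha⟩ := P.exists_deg_eq_coe hx
  obtain ⟨b, hb⟩ := P.exists_deg_eq_coe hy
  rw [P.deg_mul_of_isUnit ha hb (P.deg_eq_coe_iff.mp hb).1.isUnit, ha, hb, Nat.cast_add]

theorem not_isUnit_of_monic (hf : P.Monic f m) (hm : 1 ≤ m) : ¬IsUnit f := by
  rintro ⟨u, rfl⟩
  have := nontrivial_of_ne _ _ hf.ne_zero
  obtain ⟨b, hb⟩ := P.exists_deg_eq_coe (u⁻¹).ne_zero
  have h := congrArg P.deg u.mul_inv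
  rw [P.deg_mul, hf.1, P.deg_one, hb] at h
  have : m + b = 0 := by exact_mod_cast h
  omega

include P in
theorem isPrincipalIdealRing : IsPrincipalIdealRing R := by
  classical
  refine ⟨fun I => ?_⟩
  by_cases hI : I = ⊥
  · exact hI ▸ inferInstance
  have hex : ∃ n : ℕ, ∃ d ∈ I, d ≠ 0 ∧ P.deg d = n := by
    obtain ⟨x, hx, hx0⟩ := Submodule.exists_mem_ne_zero_of_ne_bot hI
    obtain ⟨n, hn⟩ := P.exists_deg_eq_coe hx0
    exact ⟨n, x, hx, hx0, hn⟩
  obtain ⟨d, hdI, -, hd⟩ := Nat.find_spec hex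
  refine ⟨d, le_antisymm (fun x hx => ?_) (Submodule.span_le.mpr (by simpa using hdI))⟩
  obtain ⟨e, r, hxr, hr⟩ := P.exists_eq_mul_add hd (P.deg_eq_coe_iff.mp hd).1.isUnit x
  have hrI : r ∈ I := by
    rw [eq_sub_of_add_eq' hxr.symm]
    exact I.sub_mem hx (I.mul_mem_left e hdI)
  have hr0 : r = 0 := by
    by_contra hr0
    obtain ⟨k, hk⟩ := P.exists_deg_eq_coe hr0
    rw [hk] at hr
    exact Nat.find_min hex (Nat.cast_lt.mp hr) ⟨r, hrI, hr0, hk⟩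
  rw [Ideal.submodule_span_eq, Ideal.mem_span_singleton']
  exact ⟨e, by rw [hxr, hr0, add_zero]⟩

theorem exists_mul_add_mul_eq_one (hf : P.Monic f m)
    (hirr : ¬∃ g h : R, P.deg g < m ∧ P.deg h < m ∧ f = g * h) {b : R} (hb0 : b ≠ 0)
    (hb : P.deg b < m) : ∃ p q : R, p * b + q * f = 1 := by
  have := P.isPrincipalIdealRing
  obtain ⟨d, hd⟩ := Submodule.IsPrincipal.principal (Ideal.span {b, f})
  rw [Ideal.submodule_span_eq] at hd
  have hgen : ∀ x ∈ Ideal.span {b, f}, ∃ e, e * d = x := fun x hx =>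
    Ideal.mem_span_singleton'.mp (hd ▸ hx)
  obtain ⟨e, hfe⟩ := hgen f (Ideal.subset_span (by simp))
  obtain ⟨b', hbb'⟩ := hgen b (Ideal.subset_span (by simp))
  obtain ⟨nd, hnd⟩ := P.exists_deg_eq_coe (right_ne_zero_of_mul (hfe ▸ hf.ne_zero))
  obtain ⟨ne, hne⟩ := P.exists_deg_eq_coe (left_ne_zero_of_mul (hfe ▸ hf.ne_zero))
  obtain ⟨nb, hnb⟩ := P.exists_deg_eq_coe (left_ne_zero_of_mul (hbb' ▸ hb0))
  have hm : m = ne + nd := by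
    have h := P.deg_mul e d
    rw [hfe, hf.1, hne, hnd] at h
    exact_mod_cast h
  have hbm : nb + nd < m := by
    rw [← hbb', P.deg_mul, hnb, hnd] at hb
    exact_mod_cast hb
  have hnd0 : nd = 0 := by
    by_contra hpos
    refine hirr ⟨e, d, ?_, ?_, hfe.symm⟩
    · rw [hne]; exact_mod_cast (by omega : ne < m)
    · rw [hnd]; exact_mod_cast (by omega : nd < m)
  obtain ⟨c, rfl⟩ : ∃ c, d = P.C c := ⟨_, P.eq_C_of_deg_le_zero (hnd0 ▸ hnd).le⟩
  have hc : c ≠ 0 := by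
    rintro rfl
    exact hf.ne_zero (by rw [← hfe, _root_.map_zero, mul_zero])
  have h1 : (1 : R) ∈ Ideal.span {b, f} := by
    rw [hd]
    exact Ideal.mem_span_singleton'.mpr ⟨P.C c⁻¹, by rw [← map_mul, inv_mul_cancel₀ hc, map_one]⟩
  obtain ⟨p, q, hpq⟩ := Submodule.mem_span_pair.mp h1
  exact ⟨p, q, hpq⟩

theorem surjOn_pmul_right {a b p q w : R} {n : ℕ} (hf : P.Monic f m) (ha : P.deg a = n)
    (hbez : p * b + q * f = 1) (hab : a * b = w * f) :
    Set.SurjOn (fun r => P.pmul f r b) (P.degLT n) (P.degLT m) := by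
  intro s hs
  obtain ⟨q', r, hqr, hr⟩ :=
    P.exists_eq_mul_add ha (P.deg_eq_coe_iff.mp ha).1.isUnit (s * p)
  refine ⟨r, hr, P.modr_eq hf (q := -(s * q) - q' * w) ?_ hs⟩
  rw [eq_sub_of_add_eq' hqr.symm, sub_mul, mul_assoc, eq_sub_of_add_eq hbez, mul_assoc q', hab]
  noncomm_ring

theorem pmul_ne_zero [Finite S] (hf : P.Monic f m)
    (hirr : ¬∃ g h : R, P.deg g < m ∧ P.deg h < m ∧ f = g * h) {a b : R}
    (ha : a ∈ P.degLT m) (hb : b ∈ P.degLT m) (ha0 : a ≠ 0) (hb0 : b ≠ 0) :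
    P.pmul f a b ≠ 0 := by
  intro hab
  obtain ⟨w, hw, -⟩ := P.exists_eq_mul_add_modr hf (a * b)
  rw [show P.modr f (a * b) = 0 from hab, add_zero] at hw
  obtain ⟨p, q, hpq⟩ := P.exists_mul_add_mul_eq_one hf hirr hb0 hb
  obtain ⟨n, hn⟩ := P.exists_deg_eq_coe ha0
  have hnm : n < m := by
    have ha' : P.deg a < m := ha
    rw [hn] at ha'
    exact_mod_cast ha'
  have hcard : Nat.card S ^ m ≤ Nat.card S ^ n := by
    rw [← P.ncard_degLT, ← P.ncard_degLT]
    exact (Set.ncard_le_ncard (P.surjOn_pmul_right hf hn hpq hw)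
      ((P.finite_degLT n).image _)).trans (Set.ncard_image_le (P.finite_degLT n))
  exact absurd hcard (not_le.mpr (Nat.pow_lt_pow_right Finite.one_lt_card hnm))

theorem isDivisionPetitAlgebra_of_irreducible [Finite S] (hf : P.Monic f m)
    (hirr : ¬∃ g h : R, P.deg g < m ∧ P.deg h < m ∧ f = g * h) :
    P.IsDivisionPetitAlgebra f m := by
  intro x hx hx0
  have hsub : ∀ {y y'}, y ∈ P.degLT m → y' ∈ P.degLT m → y - y' ∈ P.degLT m :=
    fun hy hy' => P.deg_sub_lt hy hy'
  constructor
  · refine ((P.finite_degLT m).injOn_iff_bijOn_of_mapsTo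
      fun y _ => P.pmul_mem_degLT hf x y).mp fun y hy y' hy' h => ?_
    by_contra hne
    exact P.pmul_ne_zero hf hirr hx (hsub hy hy') hx0 (sub_ne_zero.mpr hne)
      (by rw [P.pmul_sub hf]; exact sub_eq_zero.mpr h)
  · refine ((P.finite_degLT m).injOn_iff_bijOn_of_mapsTo
      fun y _ => P.pmul_mem_degLT hf y x).mp fun y hy y' hy' h => ?_
    by_contra hne
    exact P.pmul_ne_zero hf hirr (hsub hy hy') hx (sub_ne_zero.mpr hne) hx0
      (by rw [P.sub_pmul hf]; exact sub_eq_zero.mpr h)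

end DivisionRing

end SkewPolyRing

open scoped NumberField

theorem reduced_petit_division_iff_general
    (F K : Type*) [Field F] [Field K] [NumberField K]
    [Algebra F K]
    (𝔭 : Ideal (𝓞 F)) [𝔭.IsPrime] (h𝔭 : 𝔭 ≠ ⊥)
    (pK : Ideal (𝓞 K)) (hpK : pK = Ideal.map (algebraMap (𝓞 F) (𝓞 K)) 𝔭)
    (σb : (𝓞 K ⧸ pK) →+* (𝓞 K ⧸ pK))
    (δb : (𝓞 K ⧸ pK) → (𝓞 K ⧸ pK))
    {R' : Type*} [Ring R'] (Q : SkewPolyRing (𝓞 K ⧸ pK) σb δb R')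
    (fb : R') (m : ℕ) (hm : 1 ≤ m) (hf : Q.Monic fb m)
    (Sf : Set R') (hSf : Sf = {x : R' | Q.deg x < (m : WithBot ℕ)}) :
    ((IsField (𝓞 K ⧸ pK) ∧ ¬ IsUnit fb ∧
        ¬ ∃ g h : R', Q.deg g < (m : WithBot ℕ) ∧ Q.deg h < (m : WithBot ℕ) ∧ fb = g * h) →
      (∀ x ∈ Sf, x ≠ 0 →
        Set.BijOn (fun y => Q.pmul fb x y) Sf Sf ∧
        Set.BijOn (fun y => Q.pmul fb y x) Sf Sf)) ∧
    ((∀ x ∈ Sf, x ≠ 0 →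
        Set.BijOn (fun y => Q.pmul fb x y) Sf Sf ∧
        Set.BijOn (fun y => Q.pmul fb y x) Sf Sf) →
      (IsField (𝓞 K ⧸ pK) ∧ ¬ IsUnit fb ∧
        ¬ ∃ g h : R', Q.deg g < (m : WithBot ℕ) ∧ Q.deg h < (m : WithBot ℕ) ∧ fb = g * h)) := by
  subst hSf hpK
  have : Finite (𝓞 K ⧸ 𝔭.map (algebraMap (𝓞 F) (𝓞 K))) :=
    Ideal.finiteQuotientOfFreeOfNeBot _ (Ideal.map_ne_bot_of_ne_bot h𝔭)
  constructor
  · rintro ⟨hfield, -, hirr⟩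
    let _ := hfield.toField
    exact Q.isDivisionPetitAlgebra_of_irreducible hf hirr
  · intro hdiv
    have := Q.noZeroDivisors_of_isDivisionPetitAlgebra hf hm hdiv
    have : Nontrivial (𝓞 K ⧸ 𝔭.map (algebraMap (𝓞 F) (𝓞 K))) := by
      rw [Ideal.Quotient.nontrivial_iff, ne_eq, Ideal.map_eq_top_iff _
        (FaithfulSMul.algebraMap_injective _ _) (algebraMap_isIntegral_iff.mpr inferInstance)]
      exact Ideal.IsPrime.ne_top ‹_›
    have := NoZeroDivisors.to_isDomain (𝓞 K ⧸ 𝔭.map (algebraMap (𝓞 F) (𝓞 K)))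
    have hfield := Finite.isField_of_domain (𝓞 K ⧸ 𝔭.map (algebraMap (𝓞 F) (𝓞 K)))
    let _ := hfield.toField
    exact ⟨hfield, Q.not_isUnit_of_monic hf hm,
      Q.not_exists_factor_of_isDivisionPetitAlgebra hf hdiv⟩

/-- division criterion for the reduced Petit algebra `S_f̄`.
If `O_K/𝔭O_K` is a field and `f̄` is irreducible then `S_f̄` is a division algebra;
conversely, if `S_f̄` is a division algebra then `O_K/𝔭O_K` is a field and `f̄` is
irreducible. Here "division algebra" means: every nonzero element of
`S_f̄ = {x | deg x < m}` has bijective left and right multiplication maps. -/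
theorem reduced_petit_division_iff
    (F K : Type*) [Field F] [Field K] [NumberField F] [NumberField K]
    [Algebra F K] [IsGalois F K]
    (𝔭 : Ideal (𝓞 F)) [𝔭.IsPrime] (h𝔭 : 𝔭 ≠ ⊥)
    (pK : Ideal (𝓞 K)) (hpK : pK = Ideal.map (algebraMap (𝓞 F) (𝓞 K)) 𝔭)
    (σb : (𝓞 K ⧸ pK) →+* (𝓞 K ⧸ pK)) (hσb : Function.Injective σb)
    (δb : (𝓞 K ⧸ pK) → (𝓞 K ⧸ pK)) (hδb : IsLeftSigmaDerivation σb δb)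
    {R' : Type*} [Ring R'] (Q : SkewPolyRing (𝓞 K ⧸ pK) σb δb R')
    (fb : R') (m : ℕ) (hm : 1 ≤ m) (hf : Q.Monic fb m)
    (Sf : Set R') (hSf : Sf = {x : R' | Q.deg x < (m : WithBot ℕ)}) :
    ((IsField (𝓞 K ⧸ pK) ∧ ¬ IsUnit fb ∧
        ¬ ∃ g h : R', Q.deg g < (m : WithBot ℕ) ∧ Q.deg h < (m : WithBot ℕ) ∧ fb = g * h) →
      (∀ x ∈ Sf, x ≠ 0 →
        Set.BijOn (fun y => Q.pmul fb x y) Sf Sf ∧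
        Set.BijOn (fun y => Q.pmul fb y x) Sf Sf)) ∧
    ((∀ x ∈ Sf, x ≠ 0 →
        Set.BijOn (fun y => Q.pmul fb x y) Sf Sf ∧
        Set.BijOn (fun y => Q.pmul fb y x) Sf Sf) →
      (IsField (𝓞 K ⧸ pK) ∧ ¬ IsUnit fb ∧
        ¬ ∃ g h : R', Q.deg g < (m : WithBot ℕ) ∧ Q.deg h < (m : WithBot ℕ) ∧ fb = g * h)) :=
  reduced_petit_division_iff_general F K 𝔭 h𝔭 pK hpK σb δb Q fb m hm hf Sf hSf
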